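/- arXiv:0904.1403 — 3 statements merged into one kernel-verified Lean document; each statement's English description precedes it below -/
import Mathlib

section
/- Let ω(r) = exp(εr) and Ω(r) = exp(δr), where δ > ε > 0. Then for each r > 0 there exists R > 0 such that ωⁿ(R) ≥ Ωⁿ(r) for all n ∈ ℕ (where fⁿ denotes n-fold iteration). -/
/-! Put `xₙ = Ωⁿ(r)` and `yₙ = ωⁿ(R)`. The iteration preserves the inequality `δ x + C ≤ ε y` as
soon as `C ≥ 0` satisfies `δ + C ≤ ε e^C`: then `e^{ε y} ≥ e^C e^{δ x}`, and since `e^{δ x} ≥ 1`,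
`δ e^{δ x} + C ≤ (δ + C) e^{δ x} ≤ ε e^C e^{δ x}`. Choosing `R = (δ r + C) / ε` makes it hold at
`n = 0`, and `ε x ≤ δ x ≤ ε y` gives `x ≤ y`. -/

open Real

theorem exists_nonneg_add_le_mul_exp {ε : ℝ} (hε : 0 < ε) (δ : ℝ) (hδ : 0 ≤ δ) :
    ∃ C, 0 ≤ C ∧ δ + C ≤ ε * exp C := by
  refine ⟨(δ + 2) / ε, by positivity, ?_⟩
  set C := (δ + 2) / ε
  have hεC : ε * C = δ + 2 := mul_div_cancel₀ _ hε.ne'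
  have hC : 0 ≤ C := by positivity
  calc δ + C ≤ ε * (1 + C + C ^ 2 / 2) := by nlinarith
    _ ≤ ε * exp C := by gcongr; exact quadratic_le_exp_of_nonneg hC

theorem add_le_mul_exp_of_add_le {ε δ C x y : ℝ} (hε : 0 < ε) (hC : 0 ≤ C)
    (hδC : δ + C ≤ ε * exp C) (hx : 0 ≤ x) (hδ : 0 ≤ δ) (hxy : δ * x + C ≤ ε * y) :
    δ * exp (δ * x) + C ≤ ε * exp (ε * y) := by
  have hu : 1 ≤ exp (δ * x) := one_le_exp (by positivity)
  calc δ * exp (δ * x) + C ≤ (δ + C) * exp (δ * x) := by nlinarith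
    _ ≤ ε * exp C * exp (δ * x) := by gcongr
    _ = ε * exp (δ * x + C) := by rw [exp_add]; ring
    _ ≤ ε * exp (ε * y) := by gcongr

theorem iterate_exp_mul_nonneg (δ : ℝ) {r : ℝ} (hr : 0 ≤ r) (n : ℕ) :
    0 ≤ (fun t : ℝ => exp (δ * t))^[n] r := by
  have hmaps : Set.MapsTo (fun t : ℝ => exp (δ * t)) (Set.Ici 0) (Set.Ici 0) :=
    fun _ _ => (exp_pos _).le
  exact hmaps.iterate n hr

theorem stmt_0 (ε δ : ℝ) (hε : 0 < ε) (hδ : ε < δ) (r : ℝ) (hr : 0 < r) :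
    ∃ R > 0, ∀ n : ℕ,
      (fun t : ℝ => Real.exp (ε * t))^[n] R ≥ (fun t : ℝ => Real.exp (δ * t))^[n] r := by
  have hδpos : 0 < δ := hε.trans hδ
  obtain ⟨C, hC, hδC⟩ := exists_nonneg_add_le_mul_exp hε δ hδpos.le
  set R := (δ * r + C) / ε
  have hinv : ∀ n, δ * (fun t : ℝ => exp (δ * t))^[n] r + C
      ≤ ε * (fun t : ℝ => exp (ε * t))^[n] R := by
    intro n
    induction n with
    | zero => simp only [Function.iterate_zero, id_eq, R, mul_div_cancel₀ _ hε.ne', le_refl]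
    | succ k ih =>
      simp only [Function.iterate_succ_apply']
      exact add_le_mul_exp_of_add_le hε hC hδC (iterate_exp_mul_nonneg δ hr.le k) hδpos.le ih
  refine ⟨R, by positivity, fun n => ?_⟩
  have hx := iterate_exp_mul_nonneg δ hr.le n
  exact le_of_mul_le_mul_left ((mul_le_mul_of_nonneg_right hδ.le hx).trans
    ((le_add_of_nonneg_right hC).trans (hinv n))) hε
end

section
/- Let ε, δ be real numbers with δ > ε > 0, set s = 2δ/ε, ω(r) = exp(εr), Ω(r) = exp(δr). If R ≥ max(s·r, (2/ε)·log s) and ω(t) ≥ t for all t ≥ R, then Ωⁿ(r) ≤ (1/s)·ωⁿ(R) for all n ≥ 1. -/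
/-!
Compare the two orbits through the invariant `s * y ≤ x ∧ R ≤ x`, with `y` on the `Ω`-orbit of `r`
and `x` on the `ω`-orbit of `R`. Since `ε s = 2δ`, the bound `s y ≤ x` gives `δ y ≤ ε x / 2`, and
`x ≥ R ≥ (2/ε) log s` absorbs the factor `s`: `s · Ω(y) ≤ exp(log s + ε x / 2) ≤ ω(x)`.
The condition `ω(t) ≥ t` on `[R, ∞)` keeps the `ω`-orbit above `R`.
-/

open Real

theorem Function.iterate_preserves_rel {α β : Type*} {f : α → α} {g : β → β} (P : α → β → Prop)
    (h : ∀ x y, P x y → P (f x) (g y)) {x : α} {y : β} (hxy : P x y) (n : ℕ) :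
    P (f^[n] x) (g^[n] y) := by
  induction n with
  | zero => exact hxy
  | succ n ih =>
    rw [Function.iterate_succ_apply', Function.iterate_succ_apply']
    exact h _ _ ih

theorem mul_exp_le_exp_of_mul_le {ε δ s x y : ℝ} (hε : 0 < ε) (hs : 0 < s)
    (hεs : ε * s = 2 * δ) (hy : s * y ≤ x) (hx : 2 * log s ≤ ε * x) :
    s * exp (δ * y) ≤ exp (ε * x) := by
  have hδy : 2 * (δ * y) ≤ ε * x := by
    rw [← mul_assoc, ← hεs, mul_assoc]
    exact mul_le_mul_of_nonneg_left hy hε.le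
  calc s * exp (δ * y) = exp (log s + δ * y) := by rw [exp_add, exp_log hs]
    _ ≤ exp (ε * x) := exp_le_exp.mpr (by linarith)

theorem stmt_1_general (ε δ r R : ℝ) (hε : 0 < ε) (hδ : ε < δ)
    (s : ℝ) (hs : s = 2 * δ / ε)
    (hR : R ≥ max (s * r) ((2 / ε) * Real.log s))
    (hfix : ∀ t ≥ R, Real.exp (ε * t) ≥ t) :
    ∀ n : ℕ, 1 ≤ n →
      (fun t : ℝ => Real.exp (δ * t))^[n] r ≤ (1 / s) * (fun t : ℝ => Real.exp (ε * t))^[n] R := by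
  intro n _
  have hs_pos : 0 < s := by rw [hs]; exact div_pos (by linarith) hε
  have hεs : ε * s = 2 * δ := by rw [hs]; field_simp
  have hsr : s * r ≤ R := (le_max_left _ _).trans hR
  have hlog : 2 * log s ≤ ε * R := by
    have := mul_le_mul_of_nonneg_left ((le_max_right _ _).trans hR) hε.le
    rwa [← mul_assoc, mul_div_cancel₀ _ hε.ne'] at this
  have key := Function.iterate_preserves_rel (fun y x => s * y ≤ x ∧ R ≤ x)
    (f := fun t => exp (δ * t)) (g := fun t => exp (ε * t))
    (fun y x ⟨hyx, hRx⟩ =>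
      ⟨mul_exp_le_exp_of_mul_le hε hs_pos hεs hyx
        (hlog.trans (mul_le_mul_of_nonneg_left hRx hε.le)), hRx.trans (hfix x hRx)⟩)
    ⟨hsr, le_rfl⟩ n
  rw [one_div, inv_mul_eq_div, le_div_iff₀ hs_pos, mul_comm]
  exact key.1

theorem stmt_1 (ε δ r R : ℝ) (hε : 0 < ε) (hδ : ε < δ) (hr : 0 < r)
    (s : ℝ) (hs : s = 2 * δ / ε)
    (hR : R ≥ max (s * r) ((2 / ε) * Real.log s))
    (hfix : ∀ t ≥ R, Real.exp (ε * t) ≥ t) :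
    ∀ n : ℕ, 1 ≤ n →
      (fun t : ℝ => Real.exp (δ * t))^[n] r ≤ (1 / s) * (fun t : ℝ => Real.exp (ε * t))^[n] R :=
  stmt_1_general ε δ r R hε hδ s hs hR hfix
end

section
/- Let α ≥ 0, β ≥ 0, c = 1/(4(α+2)), and let z, ζ be complex numbers with Re z > 0, Re ζ > 0, |z| > (1/c)|ζ|, and |Im z − Im ζ| ≤ α·max(Re z, Re ζ) + β. If Re z ≤ c·|z|, then |z| ≤ 2(α+2)·c·|z| + β; consequently, if additionally β ≤ (1/4)|z|, then Re z > c·|z|. -/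
/-! If `Re z ≤ c‖z‖`, then both `Re z` and `‖ζ‖` are at most `r := c‖z‖`, so
`‖z‖ ≤ Re z + |Im z - Im ζ| + |Im ζ| ≤ (α + 2) r + β`. With `c = 1/(4(α+2))` this says
`‖z‖ ≤ ‖z‖/4 + β`, which is impossible once `β ≤ ‖z‖/4`. -/

lemma Complex.norm_le_of_re_le_of_norm_le {α β r : ℝ} (hα : 0 ≤ α) {z ζ : ℂ} (hz : 0 ≤ z.re)
    (hzr : z.re ≤ r) (hζr : ‖ζ‖ ≤ r) (him : |z.im - ζ.im| ≤ α * max z.re ζ.re + β) :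
    ‖z‖ ≤ (α + 2) * r + β := by
  have hmax : max z.re ζ.re ≤ r := max_le hzr ((Complex.re_le_norm ζ).trans hζr)
  calc ‖z‖ ≤ |z.re| + |z.im| := Complex.norm_le_abs_re_add_abs_im z
    _ ≤ z.re + (|z.im - ζ.im| + |ζ.im|) := by
      rw [abs_of_nonneg hz]
      gcongr
      linarith [abs_sub_abs_le_abs_sub z.im ζ.im]
    _ ≤ r + (α * r + β + r) := by
      gcongr
      · exact him.trans (by gcongr)
      · exact (Complex.abs_im_le_norm ζ).trans hζr
    _ = (α + 2) * r + β := by ring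

theorem stmt_4_general (α β : ℝ) (hα : 0 ≤ α) (c : ℝ) (hc : c = 1 / (4 * (α + 2)))
    (z ζ : ℂ) (hz : 0 < z.re)
    (hmod : ‖z‖ > (1 / c) * ‖ζ‖)
    (him : |z.im - ζ.im| ≤ α * max z.re ζ.re + β) :
    (z.re ≤ c * ‖z‖ → ‖z‖ ≤ 2 * (α + 2) * c * ‖z‖ + β) ∧
      (β ≤ (1 / 4) * ‖z‖ → z.re > c * ‖z‖) := by
  have hc_pos : 0 < c := by rw [hc]; positivity
  have hz_pos : 0 < ‖z‖ := hz.trans_le (Complex.re_le_norm z)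
  have hζ_lt : ‖ζ‖ < c * ‖z‖ := by
    rwa [gt_iff_lt, one_div_mul_eq_div, div_lt_iff₀' hc_pos] at hmod
  have hαc : 2 * (α + 2) * c = 1 / 2 := by rw [hc]; field_simp; ring
  have bound : z.re ≤ c * ‖z‖ → ‖z‖ ≤ 2 * (α + 2) * c * ‖z‖ + β := fun hre => by
    have := Complex.norm_le_of_re_le_of_norm_le hα hz.le hre hζ_lt.le him
    have : 0 ≤ (α + 2) * (c * ‖z‖) := by positivity
    linarith
  refine ⟨bound, fun hβ => lt_of_not_ge fun hre => ?_⟩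
  have := bound hre
  rw [hαc] at this
  linarith

theorem stmt_4 (α β : ℝ) (hα : 0 ≤ α) (hβ : 0 ≤ β) (c : ℝ) (hc : c = 1 / (4 * (α + 2)))
    (z ζ : ℂ) (hz : 0 < z.re) (hζ : 0 < ζ.re)
    (hmod : ‖z‖ > (1 / c) * ‖ζ‖)
    (him : |z.im - ζ.im| ≤ α * max z.re ζ.re + β) :
    (z.re ≤ c * ‖z‖ → ‖z‖ ≤ 2 * (α + 2) * c * ‖z‖ + β) ∧
      (β ≤ (1 / 4) * ‖z‖ → z.re > c * ‖z‖) :=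
  stmt_4_general α β hα c hc z ζ hz hmod him
end
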